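/- arXiv:1609.07780 — 3 statements merged into one kernel-verified Lean document; each statement's English description precedes it below -/
import Mathlib

section
/- For every graph G and every tree-cut decomposition T of G, width'(T) − 1 ≤ width''(T) ≤ (width'(T))². -/
open Classical

attribute [local instance] Classical.propDecidable

noncomputable section

/-- A finite multigraph without loops: finitely many vertices, finitely many
edges (parallel edges are allowed since `E` is an abstract edge type),
each edge having two distinct endpoints. -/
structure Multigraph : Type 1 where
  V : Type
  E : Type
  fintypeV : Fintype V
  fintypeE : Fintype E
  ends : E → Sym2 V
  loopless : ∀ e : E, ¬ (ends e).IsDiag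

attribute [instance] Multigraph.fintypeV Multigraph.fintypeE

theorem sym2_map_not_isDiag {α β : Type} {f : α → β} (hf : Function.Injective f) :
    ∀ {p : Sym2 α}, ¬ p.IsDiag → ¬ (p.map f).IsDiag := by
  intro p
  induction p using Sym2.ind with
  | _ x y =>
    intro hp h
    rw [Sym2.map_pair_eq, Sym2.mk_isDiag_iff] at h
    exact hp (by rw [Sym2.mk_isDiag_iff]; exact hf h)

theorem sym2_isDiag_of_map {α β : Type} (f : α → β) (p : Sym2 α)
    (hinj : ∀ x ∈ p, ∀ y ∈ p, f x = f y → x = y)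
    (h : (p.map f).IsDiag) : p.IsDiag := by
  induction p using Sym2.ind with
  | _ a b =>
    rw [Sym2.map_pair_eq, Sym2.mk_isDiag_iff] at h
    rw [Sym2.mk_isDiag_iff]
    exact hinj a (Sym2.mem_mk_left a b) b (Sym2.mem_mk_right a b) h

namespace Multigraph

/-- `|G|`: the number of vertices of `G`. -/
def numVerts (G : Multigraph) : ℕ := Fintype.card G.V

/-- `‖G‖`: the number of edges of `G` (with multiplicities). -/
def numEdges (G : Multigraph) : ℕ := Fintype.card G.E

/-- The degree of a vertex: the number of incident edges. -/
def degree (G : Multigraph) (v : G.V) : ℕ := {e : G.E | v ∈ G.ends e}.ncard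

/-- A graph is subcubic if every vertex has degree at most `3`. -/
def Subcubic (G : Multigraph) : Prop := ∀ v : G.V, G.degree v ≤ 3

/-- The graph `G - D` obtained by deleting the set `D` of edges. -/
def deleteEdges (G : Multigraph) (D : Finset G.E) : Multigraph where
  V := G.V
  E := {e : G.E // e ∉ D}
  fintypeV := G.fintypeV
  fintypeE := Fintype.ofFinite _
  ends := fun e => G.ends e.1
  loopless := fun e => G.loopless e.1

/-- Walks in a multigraph, recorded as sequences of edges together with
compatible endpoints. -/
inductive Walk (G : Multigraph) : G.V → G.V → Type
  | nil (v : G.V) : Walk G v v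
  | cons {u v w : G.V} (e : G.E) (h : G.ends e = s(u, v)) (p : Walk G v w) : Walk G u w

/-- The list of edges traversed by a walk. -/
def Walk.edges {G : Multigraph} : {u v : G.V} → Walk G u v → List G.E
  | _, _, .nil _ => []
  | _, _, .cons e _ p => e :: p.edges

/-- The list of vertices visited by a walk. -/
def Walk.support {G : Multigraph} : {u v : G.V} → Walk G u v → List G.V
  | u, _, .nil _ => [u]
  | u, _, .cons _ _ p => u :: p.support

/-- A walk is a path if it has no repeated vertices. -/
def Walk.IsPath {G : Multigraph} {u v : G.V} (p : Walk G u v) : Prop := p.support.Nodup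

def Reachable (G : Multigraph) (u v : G.V) : Prop := Nonempty (Walk G u v)

/-- A multigraph is connected if it is nonempty and every two vertices are
joined by a walk. -/
def Connected (G : Multigraph) : Prop := Nonempty G.V ∧ ∀ u v : G.V, G.Reachable u v

/-- The vertex set of the connected component of `v`. -/
def component (G : Multigraph) (v : G.V) : Set G.V := {u | G.Reachable u v}

/-- Reachability inside a set `S` of vertices, i.e. reachability in `G[S]`. -/
def ReachIn (G : Multigraph) (S : Set G.V) (u v : G.V) : Prop :=
  ∃ p : Walk G u v, ∀ x ∈ p.support, x ∈ S

/-- The induced subgraph `G[S]` is connected. -/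
def ConnectedOn (G : Multigraph) (S : Set G.V) : Prop :=
  ∀ u ∈ S, ∀ v ∈ S, G.ReachIn S u v

/-- The number of connected components of the induced subgraph `G[S]`, expressed
as the maximum size of a family of vertices of `S` that are pairwise
non-connected within `S`. -/
def compCount (G : Multigraph) (S : Set G.V) : ℕ :=
  sSup {n | ∃ f : Fin n → G.V, (∀ i, f i ∈ S) ∧
    ∀ i j, i ≠ j → ¬ G.ReachIn S (f i) (f j)}

/-- The set of edges of the induced subgraph `G[X]`. -/
def inducedEdges (G : Multigraph) (X : Set G.V) : Set G.E :=
  {e | ∀ v ∈ G.ends e, v ∈ X}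

/-- The edge boundary `δ(X)`: edges with exactly one endpoint in `X`. -/
def edgeBoundary (G : Multigraph) (X : Set G.V) : Set G.E :=
  {e | ∃ u v : G.V, G.ends e = s(u, v) ∧ u ∈ X ∧ v ∉ X}

/-- The (open) neighbourhood `N(S)`. -/
def nbhd (G : Multigraph) (S : Set G.V) : Set G.V :=
  {u | u ∉ S ∧ ∃ (e : G.E) (v : G.V), v ∈ S ∧ G.ends e = s(u, v)}

/-- All parallel edges between `u` and `v`. -/
def parallelEdges (G : Multigraph) (u v : G.V) : Set G.E := {e | G.ends e = s(u, v)}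

/-- Planarity of a multigraph, via a topological embedding in the plane:
vertices map injectively to points, edges map to arcs between the images of
their endpoints, and two arcs may only meet at images of common endpoints. -/
def Planar (G : Multigraph) : Prop :=
  ∃ f : G.V → ℝ × ℝ, Function.Injective f ∧
    ∃ γ : G.E → ℝ → ℝ × ℝ,
      (∀ e, ContinuousOn (γ e) (Set.Icc 0 1)) ∧
      (∀ e, Set.InjOn (γ e) (Set.Icc 0 1)) ∧
      (∀ e, ∃ u v : G.V, G.ends e = s(u, v) ∧ γ e 0 = f u ∧ γ e 1 = f v) ∧
      (∀ (e : G.E) (v : G.V), f v ∈ γ e '' Set.Icc 0 1 → v ∈ G.ends e) ∧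
      (∀ e e' : G.E, e ≠ e' →
        ∀ pt ∈ γ e '' Set.Icc 0 1 ∩ γ e' '' Set.Icc 0 1, ∃ v : G.V, pt = f v)

/-- The disjoint union `G ⊎ H` of two multigraphs. -/
def disjUnion (G H : Multigraph) : Multigraph where
  V := G.V ⊕ H.V
  E := G.E ⊕ H.E
  fintypeV := Fintype.ofFinite _
  fintypeE := Fintype.ofFinite _
  ends := Sum.elim (fun e => (G.ends e).map Sum.inl) (fun e => (H.ends e).map Sum.inr)
  loopless := by
    rintro (e | e) h
    · exact sym2_map_not_isDiag Sum.inl_injective (G.loopless e) h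
    · exact sym2_map_not_isDiag Sum.inr_injective (H.loopless e) h

/-- The induced subgraph `G[S]` (equivalently, `G` with the vertices outside
`S` deleted). -/
def induce (G : Multigraph) (S : Set G.V) : Multigraph where
  V := ↥S
  E := {e : G.E // ∀ v ∈ G.ends e, v ∈ S}
  fintypeV := Fintype.ofFinite _
  fintypeE := Fintype.ofFinite _
  ends := fun e =>
    Sym2.map (fun a => if ha : a ∈ S then (⟨a, ha⟩ : ↥S)
      else ⟨(Quot.out (G.ends e.1)).1, e.2 _ (Sym2.out_fst_mem _)⟩) (G.ends e.1)
  loopless := by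
    intro e h
    apply G.loopless e.1
    refine sym2_isDiag_of_map _ _ (fun x hx' y hy' hf => ?_) h
    have hx : x ∈ S := e.2 x hx'
    have hy : y ∈ S := e.2 y hy'
    simp only [dif_pos hx, dif_pos hy] at hf
    exact congrArg Subtype.val hf

/-- Build a multigraph from a simple graph. -/
def ofSimple {V : Type} [Fintype V] (G : SimpleGraph V) : Multigraph where
  V := V
  E := G.edgeSet
  fintypeV := ‹Fintype V›
  fintypeE := Fintype.ofFinite _
  ends := Subtype.val
  loopless := fun e => SimpleGraph.not_isDiag_of_mem_edgeSet G e.2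

end Multigraph

open Multigraph

/-- An immersion of `H` into `G`: an injection on vertices together with
pairwise edge-disjoint paths in `G` joining the images of the endpoints of
the edges of `H`. -/
structure Immersion (H G : Multigraph) where
  vmap : H.V → G.V
  vmap_inj : Function.Injective vmap
  esrc : H.E → H.V
  etgt : H.E → H.V
  ends_eq : ∀ e : H.E, H.ends e = s(esrc e, etgt e)
  emap : (e : H.E) → Multigraph.Walk G (vmap (esrc e)) (vmap (etgt e))
  emap_path : ∀ e : H.E, (emap e).IsPath
  edge_disjoint : ∀ e e' : H.E, e ≠ e' → ∀ x : G.E, x ∈ (emap e).edges → x ∉ (emap e').edges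

/-- `G` contains `H` as an immersion. -/
def ContainsImm (G H : Multigraph) : Prop := Nonempty (Immersion H G)

/-- `G` is `F`-immersion-free. -/
def FFree {ι : Type} (F : ι → Multigraph) (G : Multigraph) : Prop :=
  ∀ i : ι, ¬ ContainsImm G (F i)

/-- The induced subgraph `G[X]` is `F`-immersion-free: there is no immersion
model of a member of `F` living entirely inside `X`. -/
def FFreeOn {ι : Type} (F : ι → Multigraph) (G : Multigraph) (X : Set G.V) : Prop :=
  ∀ i : ι, ¬ ∃ M : Immersion (F i) G, (∀ v, M.vmap v ∈ X) ∧
    ∀ (e : (F i).E), ∀ x ∈ (M.emap e).support, x ∈ X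

/-- `OPT_F(G)`: the minimum size of an edge set whose deletion makes `G`
`F`-immersion-free. -/
def OPT {ι : Type} (F : ι → Multigraph) (G : Multigraph) : ℕ :=
  sInf {k | ∃ D : Finset G.E, D.card = k ∧ FFree F (G.deleteEdges D)}

/-- `H` belongs to the immersion-obstruction set of the class `C`:
`H ∉ C` and every proper immersion of `H` belongs to `C`. -/
def InObsIm (C : Multigraph → Prop) (H : Multigraph) : Prop :=
  ¬ C H ∧ ∀ H' : Multigraph, ContainsImm H H' → ¬ ContainsImm H' H → C H'

/-- `MAX_F`: the maximum number of edges of a member of the family. -/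
def maxEdges {ι : Type} [Fintype ι] (F : ι → Multigraph) : ℕ :=
  Finset.univ.sup fun i => (F i).numEdges

/-- The underlying asymmetric adjacency relation of the `n × n` wall. -/
def wallRel (n : ℕ) (a b : Fin n × Fin (2 * n)) : Prop :=
  (a.1 = b.1 ∧ (a.2 : ℕ) + 1 = (b.2 : ℕ)) ∨
  (a.2 = b.2 ∧ (a.1 : ℕ) + 1 = (b.1 : ℕ) ∧ ((a.1 : ℕ) + (a.2 : ℕ)) % 2 = 0)

/-- The `n × n` wall graph `W_{n,n}`. -/
def Wall (n : ℕ) : Multigraph := Multigraph.ofSimple (SimpleGraph.fromRel (wallRel n))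

/-- A graph parameter is closed under immersions. -/
def ImmersionClosed (p : Multigraph → ℕ) : Prop :=
  ∀ G H : Multigraph, ContainsImm G H → p H ≤ p G

/-- A graph parameter is closed under disjoint unions. -/
def DisjUnionClosed (p : Multigraph → ℕ) : Prop :=
  ∀ G H : Multigraph, p (G.disjUnion H) = max (p G) (p H)

/-- A graph parameter is large on walls. -/
def LargeOnWalls (p : Multigraph → ℕ) : Prop :=
  (Set.range fun n : ℕ => p (Wall n)).Infinite

/-- The parameter `p_r`: the minimum number of edge deletions needed to bring
the value of `p` down to at most `r`. -/
def pAtMost (p : Multigraph → ℕ) (r : ℕ) (G : Multigraph) : ℕ :=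
  sInf {k | ∃ S : Finset G.E, S.card ≤ k ∧ p (G.deleteEdges S) ≤ r}

/-- A tree-cut decomposition of `G`: a forest `T` on node set `N` together with
a near-partition of `V(G)` into bags, such that the trees of the forest
correspond exactly to the connected components of `G`. -/
structure TreeCutDecomp (G : Multigraph) : Type 1 where
  N : Type
  fintypeN : Fintype N
  T : SimpleGraph N
  acyclic : T.IsAcyclic
  bag : N → Finset G.V
  nodeOf : G.V → N
  mem_bag : ∀ v : G.V, v ∈ bag (nodeOf v)
  bag_disjoint : ∀ t t' : N, t ≠ t' → Disjoint (bag t) (bag t')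
  comp_compat : ∀ u v : G.V, G.Reachable u v ↔ T.Reachable (nodeOf u) (nodeOf v)
  trees_used : ∀ t : N, ∃ v : G.V, T.Reachable t (nodeOf v)

attribute [instance] TreeCutDecomp.fintypeN

/-- A multigraph with a marked set of core vertices; the remaining vertices
are peripheral.  (Used for torsos and 3-centers.) -/
structure MarkedGraph : Type 1 where
  G : Multigraph
  core : Set G.V

/-- The vertex `z` has exactly two incident edges, one to `a` and one to `b`. -/
def SuppPair (G : Multigraph) (z a b : G.V) : Prop :=
  ∃ e1 e2 : G.E, e1 ≠ e2 ∧ G.ends e1 = s(z, a) ∧ G.ends e2 = s(z, b) ∧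
    ∀ e : G.E, z ∈ G.ends e → e = e1 ∨ e = e2

/-- `M'` is obtained from `M` by suppressing one peripheral vertex of degree at
most two (deleting any resulting loop). -/
def Suppresses (M M' : MarkedGraph) : Prop :=
  ∃ z : M.G.V, z ∉ M.core ∧ M.G.degree z ≤ 2 ∧
    ∃ fV : M'.G.V ≃ {v : M.G.V // v ≠ z},
      (∀ w : M'.G.V, w ∈ M'.core ↔ (fV w).1 ∈ M.core) ∧
      ((¬ (∃ a b : M.G.V, a ≠ b ∧ SuppPair M.G z a b) ∧
          ∃ fE : M'.G.E ≃ {e : M.G.E // z ∉ M.G.ends e},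
            ∀ e : M'.G.E, Sym2.map (fun w => (fV w).1) (M'.G.ends e) = M.G.ends (fE e).1) ∨
        (∃ a b : M.G.V, a ≠ b ∧ SuppPair M.G z a b ∧
          ∃ fE : M'.G.E ≃ ({e : M.G.E // z ∉ M.G.ends e} ⊕ Unit),
            ∀ e : M'.G.E, Sym2.map (fun w => (fV w).1) (M'.G.ends e) =
              Sum.elim (fun e' : {e : M.G.E // z ∉ M.G.ends e} => M.G.ends e'.1)
                (fun _ => s(a, b)) (fE e)))

/-- No peripheral vertex can be suppressed any more. -/
def MarkedGraph.Terminal (M : MarkedGraph) : Prop :=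
  ∀ z : M.G.V, z ∉ M.core → 2 < M.G.degree z

namespace TreeCutDecomp

variable {G : Multigraph}

/-- `X_{T_{ab}}`: the union of the bags on the side of `a` of the tree edge `ab`. -/
def side (D : TreeCutDecomp G) (a b : D.N) : Set G.V :=
  {v | (D.T.deleteEdges {s(a, b)}).Reachable (D.nodeOf v) a}

/-- The adhesion of the tree edge `ab`: the edges of `G` crossing between the
two sides. -/
def adh (D : TreeCutDecomp G) (a b : D.N) : Set G.E :=
  {e | ∃ u v : G.V, G.ends e = s(u, v) ∧ u ∈ D.side a b ∧ v ∈ D.side b a}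

/-- `w(t) = |X_t| + #{neighbours with bold adhesion}`. -/
def wval (D : TreeCutDecomp G) (t : D.N) : ℕ :=
  (D.bag t).card + {t' : D.N | D.T.Adj t t' ∧ 2 < (D.adh t t').ncard}.ncard

/-- The maximum adhesion size of the decomposition. -/
def maxAdh (D : TreeCutDecomp G) : ℕ :=
  Finset.univ.sup fun pq : D.N × D.N =>
    if D.T.Adj pq.1 pq.2 then (D.adh pq.1 pq.2).ncard else 0

/-- `width'` of a tree-cut decomposition. -/
def width' (D : TreeCutDecomp G) : ℕ :=
  max D.maxAdh (Finset.univ.sup fun t => D.wval t)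

/-- `z(t) = |X_t| + Σ_{e ∋ t, |adh(e)| ≥ 3} |adh(e)|`. -/
def zval (D : TreeCutDecomp G) (t : D.N) : ℕ :=
  (D.bag t).card + ∑ t' : D.N,
    if D.T.Adj t t' ∧ 3 ≤ (D.adh t t').ncard then (D.adh t t').ncard else 0

/-- `width''` of a tree-cut decomposition. -/
def width'' (D : TreeCutDecomp G) : ℕ := Finset.univ.sup fun t => D.zval t

/-- A tree-cut decomposition is connected if both sides of every tree edge
induce connected subgraphs of `G`. -/
def IsConnectedDecomp (D : TreeCutDecomp G) : Prop :=
  ∀ a b : D.N, D.T.Adj a b → G.ConnectedOn (D.side a b) ∧ G.ConnectedOn (D.side b a)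

/-- The vertex type of the torso at `t`: the core vertices (the bag at `t`)
together with one peripheral vertex for each component of `T - t` inside the
tree of `t` (equivalently, for each neighbour of `t`). -/
def TorsoV (D : TreeCutDecomp G) (t : D.N) : Type :=
  {v : G.V // v ∈ D.bag t} ⊕ {x : D.N // D.T.Adj t x}

/-- The projection of the vertices of `G` to the vertices of the torso at `t`
(defined on the connected component of `G` corresponding to the tree of `t`). -/
def torsoProj (D : TreeCutDecomp G) (t : D.N) (v : G.V) : Option (D.TorsoV t) :=
  if h : v ∈ D.bag t then some (Sum.inl ⟨v, h⟩)
  else if h2 : ∃ x : {x : D.N // D.T.Adj t x},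
      (D.T.deleteEdges {e : Sym2 D.N | t ∈ e}).Reachable (D.nodeOf v) x.1
    then some (Sum.inr h2.choose)
  else none

/-- The torso of the decomposition at the node `t` (as a multigraph): each
component of `T - t` is consolidated to a single peripheral vertex, and the
resulting loops are deleted. -/
instance instFintypeTorsoV (D : TreeCutDecomp G) (t : D.N) : Fintype (D.TorsoV t) := by
  unfold TorsoV; infer_instance

def torsoGraph (D : TreeCutDecomp G) (t : D.N) : Multigraph where
  V := D.TorsoV t
  E := {e : G.E // ∃ a b : D.TorsoV t, a ≠ b ∧
        Sym2.map (D.torsoProj t) (G.ends e) = s(some a, some b)}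
  fintypeV := inferInstance
  fintypeE := Fintype.ofFinite _
  ends := fun e => s(e.2.choose, e.2.choose_spec.choose)
  loopless := fun e hd => e.2.choose_spec.choose_spec.1 (Sym2.mk_isDiag_iff.mp hd)

/-- The torso at `t` as a marked graph: the core vertices are the vertices of
the bag at `t`. -/
def torso (D : TreeCutDecomp G) (t : D.N) : MarkedGraph where
  G := D.torsoGraph t
  core := Set.range (Sum.inl : {v : G.V // v ∈ D.bag t} → D.TorsoV t)

/-- The possible numbers of vertices of a 3-center at `t`: the sizes of the
terminal marked graphs obtained from the torso at `t` by exhaustively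
suppressing peripheral vertices of degree at most two. -/
def threeCenterSizes (D : TreeCutDecomp G) (t : D.N) : Set ℕ :=
  {n | ∃ M : MarkedGraph, Relation.ReflTransGen Suppresses (D.torso t) M ∧
    M.Terminal ∧ Fintype.card M.G.V = n}

/-- The width of a tree-cut decomposition: the maximum over all adhesion sizes
and all numbers of vertices of 3-centers. -/
def width (D : TreeCutDecomp G) : ℕ :=
  max D.maxAdh (Finset.univ.sup fun t => sSup (D.threeCenterSizes t))

/-- The component `T_{tp}` of `T - p` is connected with a neat adhesion to `p`:
the adhesion of `tp` is thin and all of its edges have an endpoint in `X_p`. -/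
def NeatAdhesionTo (D : TreeCutDecomp G) (p t : D.N) : Prop :=
  (D.adh t p).ncard ≤ 2 ∧ ∀ e ∈ D.adh t p, ∃ v ∈ D.bag p, v ∈ G.ends e

end TreeCutDecomp

/-- Tree-cut width (via the width with 3-centers). -/
def tcw (G : Multigraph) : ℕ := sInf {k | ∃ D : TreeCutDecomp G, D.width = k}

/-- Tree-cut width via `width'`. -/
def tcw' (G : Multigraph) : ℕ := sInf {k | ∃ D : TreeCutDecomp G, D.width' = k}

/-- A rooted tree-cut decomposition: every tree of the forest gets a root,
encoded by a parent function (roots are their own parents) together with a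
depth function certifying well-foundedness; the parent relation orients all
tree edges. -/
structure RootedTreeCutDecomp (G : Multigraph) extends TreeCutDecomp G where
  parent : N → N
  depth : N → ℕ
  parent_adj : ∀ t : N, parent t ≠ t → T.Adj t (parent t)
  depth_lt : ∀ t : N, parent t ≠ t → depth (parent t) < depth t
  parent_cover : ∀ t t' : N, T.Adj t t' → parent t = t' ∨ parent t' = t

namespace RootedTreeCutDecomp

variable {G : Multigraph}

/-- A rooted tree-cut decomposition is neat: it is connected, and for every
non-root node `t` whose adhesion to its parent is thin and every sibling `t'`
of `t`, there are no edges of `G` between `X_{T_{tπ(t)}}` and `X_{T_{t'π(t)}}`. -/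
def Neat (D : RootedTreeCutDecomp G) : Prop :=
  D.toTreeCutDecomp.IsConnectedDecomp ∧
  ∀ t : D.N, D.parent t ≠ t →
    (D.toTreeCutDecomp.adh t (D.parent t)).ncard ≤ 2 →
    ∀ t' : D.N, t' ≠ t → D.parent t' = D.parent t → D.parent t' ≠ t' →
      ∀ e : G.E, ¬ ∃ u v : G.V, G.ends e = s(u, v) ∧
        u ∈ D.toTreeCutDecomp.side t (D.parent t) ∧
        v ∈ D.toTreeCutDecomp.side t' (D.parent t')

end RootedTreeCutDecomp

/-- An `r`-protrusion: a set of vertices with boundary of size at most `r`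
inducing an `F`-immersion-free subgraph. -/
def IsProtrusion {ι : Type} (F : ι → Multigraph) (G : Multigraph) (r : ℕ) (X : Set G.V) : Prop :=
  (G.edgeBoundary X).ncard ≤ r ∧ FFreeOn F G X

/-- `B` is an excessive protrusion inside the connected component of `G`
containing it (with parameters `b = b_F` and `c = c_F`): it is a
`2b`-protrusion with more than `2bc` induced edges, whose removal from its
component leaves at most two connected components. -/
def IsExcessiveIn {ι : Type} (F : ι → Multigraph) (b c : ℕ) (G : Multigraph)
    (B : Set G.V) : Prop :=
  ∃ v₀ ∈ B, B ⊆ G.component v₀ ∧ IsProtrusion F G (2 * b) B ∧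
    2 * b * c < (G.inducedEdges B).ncard ∧ G.compCount (G.component v₀ \ B) ≤ 2

/-- Some connected component of `G` has an excessive protrusion. -/
def HasExcessive {ι : Type} (F : ι → Multigraph) (b c : ℕ) (G : Multigraph) : Prop :=
  ∃ B : Set G.V, IsExcessiveIn F b c G B

/-- `c` is a valid constant for the protrusion-replacement lemma with width
constant `b`. -/
def ReplacerConst {ι : Type} (F : ι → Multigraph) (b c : ℕ) : Prop :=
  ∀ (G : Multigraph) (X : Set G.V), IsProtrusion F G (2 * b) X →
    c < (G.inducedEdges X).ncard →
    ∃ G' : Multigraph, OPT F G' = OPT F G ∧ G'.numEdges < G.numEdges ∧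
      ∀ D' : Finset G'.E, FFree F (G'.deleteEdges D') →
        ∃ D : Finset G.E, FFree F (G.deleteEdges D) ∧ D.card ≤ D'.card

/-- `G[U ∪ A]` and `G[U ∪ B]` are isomorphic via an isomorphism mapping every
vertex of `U` to itself. -/
def InducedIsoFixing (G : Multigraph) (U A B : Set G.V) : Prop :=
  ∃ φ : G.V → G.V, Set.BijOn φ (U ∪ A) (U ∪ B) ∧ (∀ u ∈ U, φ u = u) ∧
    ∃ ψ : G.E → G.E, Set.BijOn ψ (G.inducedEdges (U ∪ A)) (G.inducedEdges (U ∪ B)) ∧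
      ∀ e ∈ G.inducedEdges (U ∪ A), G.ends (ψ e) = (G.ends e).map φ

/-- A family of pairwise disjoint, connected `2`-protrusions all attached to
`U` and pairwise isomorphic over `U`. -/
def IsBouquetFamily {ι : Type} (F : ι → Multigraph) (G : Multigraph) (U : Set G.V)
    (𝒮 : Set (Set G.V)) : Prop :=
  (∀ S ∈ 𝒮, S.Nonempty ∧ IsProtrusion F G 2 S ∧ G.nbhd S = U ∧ G.ConnectedOn S) ∧
  𝒮.Pairwise (fun S S' => Disjoint S S') ∧
  ∀ S ∈ 𝒮, ∀ S' ∈ 𝒮, InducedIsoFixing G U S S'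

/-- A bouquet attached to `U` (with threshold `d = d_F`): an inclusion-maximal
bouquet family with at least `d` elements. -/
def IsBouquet {ι : Type} (F : ι → Multigraph) (d : ℕ) (G : Multigraph) (U : Set G.V)
    (𝒮 : Set (Set G.V)) : Prop :=
  IsBouquetFamily F G U 𝒮 ∧ d ≤ 𝒮.ncard ∧
  ∀ 𝒮' : Set (Set G.V), 𝒮 ⊆ 𝒮' → IsBouquetFamily F G U 𝒮' → 𝒮' = 𝒮

/-- The edge set of a bouquet: all edges incident to some element of it. -/
def Multigraph.bouquetEdges (G : Multigraph) (𝒮 : Set (Set G.V)) : Set G.E :=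
  {e | ∃ S ∈ 𝒮, ∃ v ∈ G.ends e, v ∈ S}

/-- A theta attached to `{u, v}` (with threshold `d = d_F`): `u` and `v` are
joined by at least `d` parallel edges (the theta itself being the maximal set
of all parallel edges between them). -/
def IsTheta (d : ℕ) (G : Multigraph) (u v : G.V) : Prop :=
  u ≠ v ∧ d ≤ (G.parallelEdges u v).ncard

/-- The constant `d_F = max(2 b_F c_F + 2 b_F, 3 MAX_F) + 1`. -/
def dConst {ι : Type} [Fintype ι] (F : ι → Multigraph) (b c : ℕ) : ℕ :=
  max (2 * b * c + 2 * b) (3 * maxEdges F) + 1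

/-- An `r`-boundaried graph. -/
structure BGraph (r : ℕ) : Type 1 where
  G : Multigraph
  bnd : Fin r → G.V

/-- Gluing two `r`-boundaried graphs: take the disjoint union and add one edge
joining the `i`-th boundary vertices, for each `i`. -/
def glue {r : ℕ} (A B : BGraph r) : Multigraph where
  V := A.G.V ⊕ B.G.V
  E := (A.G.E ⊕ B.G.E) ⊕ Fin r
  fintypeV := Fintype.ofFinite _
  fintypeE := Fintype.ofFinite _
  ends := Sum.elim
    (Sum.elim (fun e => (A.G.ends e).map Sum.inl) (fun e => (B.G.ends e).map Sum.inr))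
    (fun i => s(Sum.inl (A.bnd i), Sum.inr (B.bnd i)))
  loopless := by
    rintro ((e | e) | i) h
    · exact sym2_map_not_isDiag Sum.inl_injective (A.G.loopless e) h
    · exact sym2_map_not_isDiag Sum.inr_injective (B.G.loopless e) h
    · simp only [Sum.elim_inr, Sym2.mk_isDiag_iff] at h
      exact Sum.inl_ne_inr h

/-- The extended graph `Ĝ` of an `r`-boundaried graph: add a new pendant vertex
`û_i` adjacent exactly to the `i`-th boundary vertex, for each `i`. -/
def BGraph.extend {r : ℕ} (A : BGraph r) : Multigraph where
  V := A.G.V ⊕ Fin r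
  E := A.G.E ⊕ Fin r
  fintypeV := Fintype.ofFinite _
  fintypeE := Fintype.ofFinite _
  ends := Sum.elim (fun e => (A.G.ends e).map Sum.inl)
    (fun i => s(Sum.inl (A.bnd i), Sum.inr i))
  loopless := by
    rintro (e | i) h
    · exact sym2_map_not_isDiag Sum.inl_injective (A.G.loopless e) h
    · simp only [Sum.elim_inr, Sym2.mk_isDiag_iff] at h
      exact Sum.inl_ne_inr h

/-- A relevant pair `(Q, φ)`: a graph with at most `(r+1)·MAX_F` edges and no
isolated vertices together with a nonempty partial map from its vertices to `[r]`. -/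
def RelevantPair (r m : ℕ) (Q : Multigraph) (φ : Q.V → Option (Fin r)) : Prop :=
  Q.numEdges ≤ (r + 1) * m ∧ (∀ v : Q.V, ∃ e : Q.E, v ∈ Q.ends e) ∧ ∃ v i, φ v = some i

/-- `Ĝ - D` admits a `φ`-rooted immersion model of `Q`: an immersion model of
`Q` mapping every vertex in the domain of `φ` to the corresponding copy `û_i`. -/
def HasRootedModel {r : ℕ} (A : BGraph r) (D : Finset A.extend.E)
    (Q : Multigraph) (φ : Q.V → Option (Fin r)) : Prop :=
  ∃ M : Immersion Q (A.extend.deleteEdges D),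
    ∀ (v : Q.V) (i : Fin r), φ v = some i → M.vmap v = Sum.inr i

/-- The deletion number of an `r`-boundaried graph with respect to a set `S` of
relevant pairs: the minimum number of edges of `Ĝ` whose deletion leaves no
`φ`-rooted immersion model of `Q`, for every `(Q, φ) ∈ S`. -/
def delNum {r : ℕ} (A : BGraph r)
    (S : ∀ Q : Multigraph, (Q.V → Option (Fin r)) → Prop) : ℕ :=
  sInf {k | ∃ D : Finset A.extend.E, D.card = k ∧
    ∀ (Q : Multigraph) (φ : Q.V → Option (Fin r)), S Q φ → ¬ HasRootedModel A D Q φ}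

/-- Two `r`-boundaried graphs have the same signature: their deletion numbers
agree on every set of relevant pairs. -/
def SameSig {r : ℕ} (m : ℕ) (A B : BGraph r) : Prop :=
  ∀ S : ∀ Q : Multigraph, (Q.V → Option (Fin r)) → Prop,
    (∀ Q φ, S Q φ → RelevantPair r m Q φ) → delNum A S = delNum B S

/-- `F`-equivalence of `r`-boundaried graphs. -/
def FEquiv {ι : Type} (F : ι → Multigraph) {r : ℕ} (A B : BGraph r) : Prop :=
  ∀ C : BGraph r, OPT F (glue A C) = OPT F (glue B C)

lemma aux_adh_le_maxAdh {G : Multigraph} (D : TreeCutDecomp G) {p q : D.N}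
    (h : D.T.Adj p q) : (D.adh p q).ncard ≤ D.maxAdh := by
  have := Finset.le_sup (f := fun pq : D.N × D.N =>
    if D.T.Adj pq.1 pq.2 then (D.adh pq.1 pq.2).ncard else 0) (Finset.mem_univ (p, q))
  simp [h] at this
  exact this

lemma aux_boldcount (G : Multigraph) (D : TreeCutDecomp G) (t : D.N) :
    {t' : D.N | D.T.Adj t t' ∧ 2 < (D.adh t t').ncard}.ncard =
      (Finset.univ.filter fun t' : D.N =>
        D.T.Adj t t' ∧ 3 ≤ (D.adh t t').ncard).card := by
  classical
  rw [Set.ncard_eq_toFinset_card']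
  congr 1
  ext t'
  simp [Nat.lt_iff_add_one_le]

/-- `width' - 1 ≤ width'' ≤ (width')²`. -/
theorem width'_width''_bounds (G : Multigraph) (D : TreeCutDecomp G) :
    D.width' - 1 ≤ D.width'' ∧ D.width'' ≤ D.width' ^ 2 := by
  classical
  set P : D.N → D.N → Prop := fun t t' => D.T.Adj t t' ∧ 3 ≤ (D.adh t t').ncard with hP
  have hsum : ∀ t : D.N, (∑ t' : D.N,
      if P t t' then (D.adh t t').ncard else 0) =
      ∑ t' ∈ Finset.univ.filter (P t), (D.adh t t').ncard := by
    intro t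
    rw [Finset.sum_filter]
  have hzval : ∀ t : D.N, D.zval t = (D.bag t).card +
      ∑ t' ∈ Finset.univ.filter (P t), (D.adh t t').ncard := by
    intro t
    rw [TreeCutDecomp.zval, ← hsum]
  have hwz : ∀ t : D.N, D.wval t ≤ D.zval t := by
    intro t
    have hcount : {t' : D.N | D.T.Adj t t' ∧ 2 < (D.adh t t').ncard}.ncard =
        (Finset.univ.filter (P t)).card := aux_boldcount G D t
    rw [TreeCutDecomp.wval, hzval t, hcount]
    have : (Finset.univ.filter (P t)).card ≤
        ∑ t' ∈ Finset.univ.filter (P t), (D.adh t t').ncard := by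
      rw [Finset.card_eq_sum_ones]
      apply Finset.sum_le_sum
      intro i hi
      have := (Finset.mem_filter.mp hi).2.2
      omega
    omega
  have hz_le : ∀ t : D.N, D.zval t ≤ D.width'' :=
    fun t => Finset.le_sup (f := D.zval) (Finset.mem_univ t)
  constructor
  · rw [Nat.sub_le_iff_le_add, TreeCutDecomp.width']
    apply max_le
    · apply Finset.sup_le
      intro pq _
      split_ifs with h
      · by_cases h3 : 3 ≤ (D.adh pq.1 pq.2).ncard
        · have hle : (D.adh pq.1 pq.2).ncard ≤ D.zval pq.1 := by
            rw [hzval]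
            have hmem : pq.2 ∈ Finset.univ.filter (P pq.1) := by
              simp [hP, h, h3]
            have h5 : (D.adh pq.1 pq.2).ncard ≤
                ∑ t' ∈ Finset.univ.filter (P pq.1), (D.adh pq.1 t').ncard :=
              Finset.single_le_sum (f := fun t' => (D.adh pq.1 t').ncard)
                (fun i _ => Nat.zero_le _) hmem
            omega
          have := hz_le pq.1
          omega
        · by_cases h0 : (D.adh pq.1 pq.2).ncard = 0
          · omega
          · have hne : (D.adh pq.1 pq.2).Nonempty :=
              Set.nonempty_of_ncard_ne_zero h0
            obtain ⟨e, u, v, _, _, _⟩ := hne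
            have h1 : 1 ≤ D.width'' := by
              calc 1 ≤ (D.bag (D.nodeOf u)).card :=
                    Finset.card_pos.mpr ⟨u, D.mem_bag u⟩
                _ ≤ D.zval (D.nodeOf u) := Nat.le_add_right _ _
                _ ≤ D.width'' := hz_le _
            omega
      · omega
    · apply Finset.sup_le
      intro t _
      have := hwz t
      have := hz_le t
      omega
  · apply Finset.sup_le
    intro t _
    have hw : D.wval t ≤ D.width' :=
      le_trans (Finset.le_sup (f := D.wval) (Finset.mem_univ t))
        (le_max_right _ _)
    have hcount : {t' : D.N | D.T.Adj t t' ∧ 2 < (D.adh t t').ncard}.ncard =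
        (Finset.univ.filter (P t)).card := aux_boldcount G D t
    rw [TreeCutDecomp.wval, hcount] at hw
    have hsum2 : ∑ t' ∈ Finset.univ.filter (P t), (D.adh t t').ncard ≤
        (Finset.univ.filter (P t)).card * D.width' := by
      have := Finset.sum_le_card_nsmul (Finset.univ.filter (P t))
        (fun t' => (D.adh t t').ncard) D.width' ?_
      · simpa [smul_eq_mul] using this
      · intro t' ht'
        have hadj := (Finset.mem_filter.mp ht').2.1
        exact le_trans (aux_adh_le_maxAdh D hadj) (le_max_left _ _)
    rw [hzval t]
    set b := (D.bag t).card
    set s := (Finset.univ.filter (P t)).card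
    set w := D.width'
    have : b + s * w ≤ w ^ 2 := by nlinarith
    omega
end
end

section
/- Let G be a graph with a neat tree-cut decomposition T = (T, X) with width'(T) ≤ b, for some integer b. Then for every node p ∈ V(T), at most 2b + 1 of the connected components of T − p are not connected with a neat adhesion to p. -/
open Classical

attribute [local instance] Classical.propDecidable

noncomputable section

open Multigraph

section TreeHelpers

open SimpleGraph

variable {N : Type} {T : SimpleGraph N}

lemma tree_del_not_reach (hT : T.IsAcyclic) {a b : N} (h : T.Adj a b) :
    ¬ (T.deleteEdges {s(a, b)}).Reachable a b := by
  have hb := (SimpleGraph.isAcyclic_iff_forall_adj_isBridge.mp hT) h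
  rw [SimpleGraph.isBridge_iff] at hb
  simpa [SimpleGraph.deleteEdges] using hb

lemma del_del_le (A B : Set (Sym2 N)) :
    (T.deleteEdges A).deleteEdges B ≤ T.deleteEdges B := by
  intro a b hab
  simp only [SimpleGraph.deleteEdges_adj] at hab ⊢
  exact ⟨hab.1.1, hab.2⟩

lemma side_step (hT : T.IsAcyclic) {t p t' : N} (htp : T.Adj t p) (hpt' : T.Adj p t')
    (hne : t ≠ t') {x : N} (hx : (T.deleteEdges {s(t, p)}).Reachable x t) :
    (T.deleteEdges {s(p, t')}).Reachable x p := by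
  obtain ⟨w⟩ := hx
  by_cases hp : p ∈ w.support
  · exact absurd (SimpleGraph.Reachable.symm ⟨w.dropUntil p hp⟩) (tree_del_not_reach hT htp)
  · have hav : ∀ e ∈ w.edges, e ∉ ({s(p, t')} : Set (Sym2 N)) := by
      intro e hew hmem
      rw [Set.mem_singleton_iff] at hmem
      subst hmem
      exact hp (w.fst_mem_support_of_mem_edges hew)
    have h1 : (T.deleteEdges {s(p, t')}).Reachable x t :=
      SimpleGraph.Reachable.mono (del_del_le _ _) ⟨w.toDeleteEdges _ hav⟩
    refine h1.trans (SimpleGraph.Adj.reachable ?_)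
    rw [SimpleGraph.deleteEdges_adj]
    refine ⟨htp, fun hmem => ?_⟩
    rw [Set.mem_singleton_iff, Sym2.eq_iff] at hmem
    rcases hmem with ⟨h1', _⟩ | ⟨h1', _⟩
    · exact htp.ne h1'
    · exact hne h1'

lemma reach_to_nbr {x p : N} (hxp : x ≠ p) (hr : T.Reachable x p) :
    ∃ s : N, T.Adj p s ∧ (T.deleteEdges {s(s, p)}).Reachable x s := by
  obtain ⟨w0⟩ := hr.symm
  obtain ⟨w, hw⟩ := w0.toPath
  cases w with
  | nil => exact absurd rfl hxp.symm
  | @cons _ s _ h rest =>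
    rw [SimpleGraph.Walk.cons_isPath_iff] at hw
    have hav : ∀ e ∈ rest.edges, e ∉ ({s(s, p)} : Set (Sym2 N)) := by
      intro e hew hmem
      rw [Set.mem_singleton_iff] at hmem
      subst hmem
      exact hw.2 (rest.snd_mem_support_of_mem_edges hew)
    exact ⟨s, h, ⟨(rest.toDeleteEdges _ hav).reverse⟩⟩

end TreeHelpers

section NeatCount

open SimpleGraph

variable {G : Multigraph} (D : RootedTreeCutDecomp G)

lemma adh_comm (a b : D.toTreeCutDecomp.N) :
    D.toTreeCutDecomp.adh a b = D.toTreeCutDecomp.adh b a := by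
  ext e
  constructor <;> rintro ⟨u, v, he, hu, hv⟩ <;>
    exact ⟨v, u, he.trans Sym2.eq_swap, hv, hu⟩

lemma key_lemma (hneat : D.Neat) {p t : D.toTreeCutDecomp.N}
    (hadj : D.toTreeCutDecomp.T.Adj p t) (hpar : D.parent t = p)
    (hthin : (D.toTreeCutDecomp.adh t p).ncard ≤ 2) {e : G.E}
    (he : e ∈ D.toTreeCutDecomp.adh t p)
    (hbad : ¬ ∃ w ∈ D.toTreeCutDecomp.bag p, w ∈ G.ends e) :
    D.parent p ≠ p ∧ e ∈ D.toTreeCutDecomp.adh p (D.parent p) := by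
  have hT := D.toTreeCutDecomp.acyclic
  obtain ⟨u, v, hends, hu, hv⟩ := he
  have hvbag : v ∉ D.toTreeCutDecomp.bag p := fun h =>
    hbad ⟨v, h, by rw [hends]; exact Sym2.mem_mk_right u v⟩
  have hnv : D.toTreeCutDecomp.nodeOf v ≠ p := fun h =>
    hvbag (h ▸ D.toTreeCutDecomp.mem_bag v)
  have hreach : D.toTreeCutDecomp.T.Reachable (D.toTreeCutDecomp.nodeOf v) p :=
    SimpleGraph.Reachable.mono (SimpleGraph.deleteEdges_le _) hv
  obtain ⟨s, hps, hvs⟩ := reach_to_nbr hnv hreach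
  have hst : s ≠ t := by
    rintro rfl
    have hv0 : (D.toTreeCutDecomp.T.deleteEdges {s(p, s)}).Reachable
        (D.toTreeCutDecomp.nodeOf v) p := hv
    rw [Sym2.eq_swap] at hv0
    exact tree_del_not_reach hT hps.symm (hvs.symm.trans hv0)
  rcases D.parent_cover p s hps with hsp | hsp
  · have hppne : D.parent p ≠ p := by rw [hsp]; exact hps.ne'
    refine ⟨hppne, ?_⟩
    have hu' : u ∈ D.toTreeCutDecomp.side p (D.parent p) := by
      rw [hsp]
      exact side_step hT hadj.symm hps hst.symm hu
    have hv'' : v ∈ D.toTreeCutDecomp.side (D.parent p) p := by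
      rw [hsp]
      exact hvs
    exact ⟨u, v, hends, hu', hv''⟩
  · exfalso
    have hpt : D.parent t ≠ t := by rw [hpar]; exact hadj.ne
    have h2 := hneat.2 t hpt (by rwa [hpar]) s hst (by rw [hsp, hpar]) (by rw [hsp]; exact hps.ne)
    refine h2 e ⟨u, v, hends, by rwa [hpar], ?_⟩
    rw [hsp]
    exact hvs

lemma thin_bad_count (hneat : D.Neat) {b : ℕ} (hw : D.toTreeCutDecomp.width' ≤ b)
    (p : D.toTreeCutDecomp.N) :
    {t : D.toTreeCutDecomp.N | D.toTreeCutDecomp.T.Adj p t ∧ D.parent t = p ∧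
      (D.toTreeCutDecomp.adh t p).ncard ≤ 2 ∧
      ∃ e, e ∈ D.toTreeCutDecomp.adh t p ∧
        ¬ ∃ w ∈ D.toTreeCutDecomp.bag p, w ∈ G.ends e}.ncard ≤ b := by
  have hT := D.toTreeCutDecomp.acyclic
  set C : Set D.toTreeCutDecomp.N :=
    {t : D.toTreeCutDecomp.N | D.toTreeCutDecomp.T.Adj p t ∧ D.parent t = p ∧
      (D.toTreeCutDecomp.adh t p).ncard ≤ 2 ∧
      ∃ e, e ∈ D.toTreeCutDecomp.adh t p ∧
        ¬ ∃ w ∈ D.toTreeCutDecomp.bag p, w ∈ G.ends e} with hCdef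
  rcases Set.eq_empty_or_nonempty C with hCe | ⟨t₀, ht₀⟩
  · simp [hCe]
  · obtain ⟨hadj₀, hpar₀, hthin₀, e₀, he₀, hbad₀⟩ := ht₀
    have hpp : D.parent p ≠ p := (key_lemma D hneat hadj₀ hpar₀ hthin₀ he₀ hbad₀).1
    classical
    have hfex : ∀ t : D.toTreeCutDecomp.N, ∃ e : G.E, t ∈ C →
        e ∈ D.toTreeCutDecomp.adh t p ∧ ¬ ∃ w ∈ D.toTreeCutDecomp.bag p, w ∈ G.ends e := by
      intro t
      by_cases ht : t ∈ C
      · obtain ⟨-, -, -, e, he, hbad⟩ := ht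
        exact ⟨e, fun _ => ⟨he, hbad⟩⟩
      · exact ⟨e₀, fun h => absurd h ht⟩
    choose f hf using hfex
    have hinj : Set.InjOn f C := by
      rintro t ht t'' ht'' hfe
      by_contra hne
      obtain ⟨he1, hb1⟩ := hf t ht
      obtain ⟨he2, hb2⟩ := hf t'' ht''
      obtain ⟨hadj, hparT, hthin, -⟩ := ht
      obtain ⟨hadj'', hpar'', hthin'', -⟩ := ht''
      obtain ⟨u, v, hev, hu, hv⟩ := he1
      obtain ⟨u'', v'', hev'', hu'', hv''⟩ := he2
      have hsym : s(u, v) = s(u'', v'') := by rw [← hev, hfe, hev'']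
      rw [Sym2.eq_iff] at hsym
      rcases hsym with ⟨h1, h2⟩ | ⟨h1, h2⟩
      · subst h1; subst h2
        have h3 := side_step hT hadj.symm hadj'' hne hu
        have h4 : (D.toTreeCutDecomp.T.deleteEdges {s(p, t'')}).Reachable
            (D.toTreeCutDecomp.nodeOf u) p := h3
        rw [Sym2.eq_swap] at h4
        have h5 : (D.toTreeCutDecomp.T.deleteEdges {s(t'', p)}).Reachable
            (D.toTreeCutDecomp.nodeOf u) t'' := hu''
        exact tree_del_not_reach hT hadj''.symm (h5.symm.trans h4)
      · subst h1; subst h2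
        have hpt : D.parent t ≠ t := by rw [hparT]; exact hadj.ne
        have h2n := hneat.2 t hpt (by rwa [hparT]) t'' (Ne.symm hne)
          (by rw [hpar'', hparT]) (by rw [hpar'']; exact hadj''.ne)
        refine h2n (f t) ⟨u, v, hev, ?_, ?_⟩
        · rw [hparT]; exact hu
        · rw [hpar'']; exact hu''
    have himg : f '' C ⊆ D.toTreeCutDecomp.adh p (D.parent p) := by
      rintro e ⟨t, ht, rfl⟩
      obtain ⟨he1, hb1⟩ := hf t ht
      obtain ⟨hadj, hparT, hthin, -⟩ := ht
      exact (key_lemma D hneat hadj hparT hthin he1 hb1).2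
    have hadhb : (D.toTreeCutDecomp.adh p (D.parent p)).ncard ≤ b := by
      have h1 : (D.toTreeCutDecomp.adh p (D.parent p)).ncard ≤ D.toTreeCutDecomp.maxAdh := by
        have h2 := Finset.le_sup (f := fun pq : D.toTreeCutDecomp.N × D.toTreeCutDecomp.N =>
          if D.toTreeCutDecomp.T.Adj pq.1 pq.2 then (D.toTreeCutDecomp.adh pq.1 pq.2).ncard else 0)
          (Finset.mem_univ (p, D.parent p))
        simpa [TreeCutDecomp.maxAdh, D.parent_adj p hpp] using h2
      exact h1.trans (le_trans (le_max_left _ _) hw)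
    calc C.ncard = (f '' C).ncard := (Set.ncard_image_of_injOn hinj).symm
      _ ≤ (D.toTreeCutDecomp.adh p (D.parent p)).ncard := Set.ncard_le_ncard himg (Set.toFinite _)
      _ ≤ b := hadhb

end NeatCount

/-- in a neat tree-cut decomposition of `width'` at most `b`, for
each node `p`, at most `2b + 1` of the components of `T − p` are not connected
with a neat adhesion to `p`. -/
theorem neat_adhesions_count (G : Multigraph) (D : RootedTreeCutDecomp G) (b : ℕ)
    (hneat : D.Neat) (hw : D.toTreeCutDecomp.width' ≤ b)
    (p : D.toTreeCutDecomp.N) :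
    {t : D.toTreeCutDecomp.N | D.toTreeCutDecomp.T.Adj p t ∧
      ¬ D.toTreeCutDecomp.NeatAdhesionTo p t}.ncard ≤ 2 * b + 1 := by
  have hsub : {t : D.toTreeCutDecomp.N | D.toTreeCutDecomp.T.Adj p t ∧
      ¬ D.toTreeCutDecomp.NeatAdhesionTo p t} ⊆
      {t' : D.toTreeCutDecomp.N | D.toTreeCutDecomp.T.Adj p t' ∧
        2 < (D.toTreeCutDecomp.adh p t').ncard} ∪
      ({t : D.toTreeCutDecomp.N | D.toTreeCutDecomp.T.Adj p t ∧ D.parent t = p ∧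
        (D.toTreeCutDecomp.adh t p).ncard ≤ 2 ∧
        ∃ e, e ∈ D.toTreeCutDecomp.adh t p ∧
          ¬ ∃ w ∈ D.toTreeCutDecomp.bag p, w ∈ G.ends e} ∪ {D.parent p}) := by
    rintro t ⟨hadj, hnn⟩
    by_cases hbold : 2 < (D.toTreeCutDecomp.adh p t).ncard
    · exact Or.inl ⟨hadj, hbold⟩
    · push_neg at hbold
      have hthin : (D.toTreeCutDecomp.adh t p).ncard ≤ 2 := by
        rw [adh_comm]; exact hbold
      have hbadE : ∃ e, e ∈ D.toTreeCutDecomp.adh t p ∧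
          ¬ ∃ w ∈ D.toTreeCutDecomp.bag p, w ∈ G.ends e := by
        by_contra hno
        push_neg at hno
        exact hnn ⟨hthin, hno⟩
      rcases D.parent_cover p t hadj with hp1 | hp2
      · exact Or.inr (Or.inr hp1.symm)
      · exact Or.inr (Or.inl ⟨hadj, hp2, hthin, hbadE⟩)
  have hBle : {t' : D.toTreeCutDecomp.N | D.toTreeCutDecomp.T.Adj p t' ∧
      2 < (D.toTreeCutDecomp.adh p t').ncard}.ncard ≤ b := by
    have h1 : D.toTreeCutDecomp.wval p ≤ b :=
      le_trans (le_trans (Finset.le_sup (Finset.mem_univ p)) (le_max_right _ _)) hw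
    exact le_trans (Nat.le_add_left _ _) h1
  have hCle := thin_bad_count D hneat hw p
  have hP : ({D.parent p} : Set D.toTreeCutDecomp.N).ncard = 1 := Set.ncard_singleton _
  refine le_trans (Set.ncard_le_ncard hsub (Set.toFinite _))
    (le_trans (Set.ncard_union_le _ _) ?_)
  refine le_trans (Nat.add_le_add_left (Set.ncard_union_le _ _) _) ?_
  omega
end
end

section
/- Let F be a fixed finite family of graphs, each connected and with at least one edge, at least one of which is planar and subcubic, and let b_F be the associated width constant. There is a constant c_F depending on F only and an algorithm that, given a graph G and a 2b_F-protrusion X in G with ‖G[X]‖ > c_F, outputs in linear time a graph G' with OPT_F(G) = OPT_F(G') and ‖G'‖ < ‖G‖. Moreover, there is a linear-time solution-lifting algorithm that, given a subset F' of edges of G' such that G' − F' is F-free, computes a subset F'' of edges of G such that G − F'' is F-free and |F''| ≤ |F'|. -/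
open Classical

attribute [local instance] Classical.propDecidable

noncomputable section

open Multigraph

-- ===================== auxiliary lemmas =====================

theorem sym2_eq_mk_out {α : Type} (p : Sym2 α) : p = s(p.out.1, p.out.2) := by
  rw [Sym2.mk, Prod.mk.eta, p.out_eq]

theorem sym2_eq_of_mem_mem {α : Type} {p : Sym2 α} {u w : α}
    (hu : u ∈ p) (hw : w ∈ p) (hne : u ≠ w) : p = s(u, w) := by
  induction p using Sym2.ind with
  | _ a b =>
    rcases Sym2.mem_iff.mp hu with rfl | rfl <;> rcases Sym2.mem_iff.mp hw with rfl | rfl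
    · exact absurd rfl hne
    · rfl
    · exact Sym2.eq_swap
    · exact absurd rfl hne

namespace Multigraph

theorem Walk.start_mem_support {G : Multigraph} {u v : G.V} (p : Walk G u v) :
    u ∈ p.support := by
  cases p <;> simp [Walk.support]

theorem Walk.end_mem_support {G : Multigraph} {u v : G.V} (p : Walk G u v) :
    v ∈ p.support := by
  induction p with
  | nil w => simp [Walk.support]
  | cons e h q ih => simp only [Walk.support, List.mem_cons]; exact Or.inr ih

theorem walk_isEmpty {G : Multigraph} (hE : IsEmpty G.E) {u v : G.V} (p : Walk G u v) :
    u = v := by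
  cases p with
  | nil => rfl
  | cons e h q => exact (hE.false e).elim

/-- Adapting a walk along a partial graph map. -/
theorem Walk.adapt {W₁ W₂ : Multigraph} (S : Set W₁.V) (f : W₁.V → W₂.V)
    {κ : Type} (k₁ : W₁.E → κ) (k₂ : W₂.E → κ)
    (hg : ∀ e : W₁.E, (∀ v ∈ W₁.ends e, v ∈ S) →
      ∃ x : W₂.E, W₂.ends x = (W₁.ends e).map f ∧ k₁ e = k₂ x) :
    ∀ {u v : W₁.V} (p : Walk W₁ u v), (∀ x ∈ p.support, x ∈ S) →
      ∃ q : Walk W₂ (f u) (f v),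
        q.support = p.support.map f ∧ q.edges.map k₂ = p.edges.map k₁ := by
  intro u v p
  induction p with
  | nil w =>
    intro _
    exact ⟨.nil (f w), by simp [Walk.support], by simp [Walk.edges]⟩
  | @cons a b c e h q ih =>
    intro hp
    have ha : a ∈ S := hp _ (by simp [Walk.support])
    have hb : b ∈ S := hp _ (by
      simp only [Walk.support, List.mem_cons]
      exact Or.inr q.start_mem_support)
    have hends : ∀ z ∈ W₁.ends e, z ∈ S := by
      intro z hz
      rw [h] at hz
      rcases Sym2.mem_iff.mp hz with rfl | rfl <;> assumption
    obtain ⟨x, hx1, hx2⟩ := hg e hends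
    obtain ⟨q', hq1, hq2⟩ := ih (fun y hy => hp y (by
      simp only [Walk.support, List.mem_cons]; exact Or.inr hy))
    refine ⟨.cons x (by rw [hx1, h, Sym2.map_pair_eq]) q', ?_, ?_⟩
    · simp only [Walk.support, List.map_cons, hq1]
    · simp only [Walk.edges, List.map_cons, hq2, hx2]

/-- Walks stay within a fiber of `σ` when every edge has monochromatic ends. -/
theorem Walk.fiber {W : Multigraph} {S' : Sort*} (σ : W.V → S')
    (hσ : ∀ e : W.E, ∀ u ∈ W.ends e, ∀ w ∈ W.ends e, σ u = σ w) :
    ∀ {u v : W.V} (p : Walk W u v), ∀ x ∈ p.support, σ x = σ u := by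
  intro u v p
  induction p with
  | nil w =>
    intro x hx
    simp only [Walk.support, List.mem_singleton] at hx
    subst hx; rfl
  | @cons a b c e h q ih =>
    intro x hx
    simp only [Walk.support, List.mem_cons] at hx
    rcases hx with rfl | hx
    · rfl
    · have hbm : b ∈ W.ends e := by rw [h]; exact Sym2.mem_mk_right _ _
      have ham : a ∈ W.ends e := by rw [h]; exact Sym2.mem_mk_left _ _
      rw [ih x hx]
      exact hσ e b hbm a ham

end Multigraph

open Multigraph in
/-- Adapting an immersion along a partial graph map. -/
theorem Immersion.adapt {W₁ W₂ Q : Multigraph} (S : Set W₁.V)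
    (f : W₁.V → W₂.V) (hf : Set.InjOn f S)
    {κ : Type} (k₁ : W₁.E → κ) (k₂ : W₂.E → κ) (hk₁ : Function.Injective k₁)
    (hg : ∀ e : W₁.E, (∀ v ∈ W₁.ends e, v ∈ S) →
      ∃ x : W₂.E, W₂.ends x = (W₁.ends e).map f ∧ k₁ e = k₂ x)
    (M : Immersion Q W₁)
    (hv : ∀ v, M.vmap v ∈ S)
    (hsupp : ∀ e : Q.E, ∀ x ∈ (M.emap e).support, x ∈ S) :
    ∃ M₂ : Immersion Q W₂, (∀ v, M₂.vmap v = f (M.vmap v)) ∧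
      ∀ e : Q.E, ∀ x ∈ (M₂.emap e).support, ∃ y ∈ (M.emap e).support, x = f y := by
  have hw : ∀ e : Q.E, ∃ q : Walk W₂ (f (M.vmap (M.esrc e))) (f (M.vmap (M.etgt e))),
      q.support = (M.emap e).support.map f ∧
      q.edges.map k₂ = (M.emap e).edges.map k₁ :=
    fun e => Walk.adapt S f k₁ k₂ hg (M.emap e) (hsupp e)
  choose w hw1 hw2 using hw
  refine ⟨{ vmap := fun v => f (M.vmap v)
            vmap_inj := fun a b hab => M.vmap_inj (hf (hv a) (hv b) hab)
            esrc := M.esrc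
            etgt := M.etgt
            ends_eq := M.ends_eq
            emap := w
            emap_path := ?_
            edge_disjoint := ?_ }, fun _ => rfl, ?_⟩
  · intro e
    show (w e).support.Nodup
    rw [hw1]
    exact (M.emap_path e).map_on
      (fun x hx y hy hxy => hf (hsupp e x hx) (hsupp e y hy) hxy)
  · intro e e' hne x hx hx'
    have h1 : k₂ x ∈ (M.emap e).edges.map k₁ := by
      rw [← hw2]; exact List.mem_map_of_mem (f := k₂) hx
    have h2 : k₂ x ∈ (M.emap e').edges.map k₁ := by
      rw [← hw2]; exact List.mem_map_of_mem (f := k₂) hx'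
    obtain ⟨y, hy, hyx⟩ := List.mem_map.mp h1
    obtain ⟨y', hy', hyx'⟩ := List.mem_map.mp h2
    have : y = y' := hk₁ (hyx.trans hyx'.symm)
    subst this
    exact M.edge_disjoint e e' hne y hy hy'
  · intro e x hx
    have : x ∈ (M.emap e).support.map f := by rw [← hw1]; exact hx
    obtain ⟨y, hy, rfl⟩ := List.mem_map.mp this
    exact ⟨y, hy, rfl⟩


open Multigraph in
/-- Transfer of `F`-freeness along a graph embedding. -/
theorem ffree_embed {ι : Type} (F : ι → Multigraph) {W₁ W₂ : Multigraph}
    (f : W₁.V → W₂.V) (hf : Function.Injective f)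
    (g : W₁.E → W₂.E) (hginj : Function.Injective g)
    (hends : ∀ e, W₂.ends (g e) = (W₁.ends e).map f) :
    FFree F W₂ → FFree F W₁ := by
  intro h i hc
  obtain ⟨M⟩ := hc
  obtain ⟨M₂, -, -⟩ := Immersion.adapt Set.univ f (fun a _ b _ hab => hf hab)
    g id hginj (fun e _ => ⟨g e, hends e, rfl⟩) M
    (fun v => Set.mem_univ _) (fun e x _ => Set.mem_univ _)
  exact h i ⟨M₂⟩

open Multigraph in
/-- The fiber lemma: a model of a connected graph lives in one fiber of `σ`. -/
theorem model_in_fiber {W Q : Multigraph} {S' : Sort*} (σ : W.V → S')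
    (hσ : ∀ e : W.E, ∀ u ∈ W.ends e, ∀ w ∈ W.ends e, σ u = σ w)
    (hQ : Q.Connected) (M : Immersion Q W) (v₀ : Q.V) :
    (∀ v : Q.V, σ (M.vmap v) = σ (M.vmap v₀)) ∧
      ∀ e : Q.E, ∀ x ∈ (M.emap e).support, σ x = σ (M.vmap v₀) := by
  have hend : ∀ {u v : W.V} (p : Walk W u v), σ v = σ u :=
    fun p => Walk.fiber σ hσ p _ p.end_mem_support
  have hadj : ∀ e : Q.E, σ (M.vmap (M.esrc e)) = σ (M.vmap (M.etgt e)) :=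
    fun e => (hend (M.emap e)).symm
  have hQwalk : ∀ {u v : Q.V} (p : Walk Q u v), σ (M.vmap u) = σ (M.vmap v) := by
    intro u v p
    induction p with
    | nil w => rfl
    | @cons a b c e h q ih =>
      have hcase := M.ends_eq e
      rw [h] at hcase
      have hab : σ (M.vmap a) = σ (M.vmap b) := by
        rcases Sym2.eq_iff.mp hcase with ⟨h1, h2⟩ | ⟨h1, h2⟩
        · rw [h1, h2]; exact hadj e
        · rw [h1, h2]; exact (hadj e).symm
      rw [hab]; exact ih
  have hfv : ∀ v : Q.V, σ (M.vmap v) = σ (M.vmap v₀) := by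
    intro v
    exact (hQwalk (Classical.choice (hQ.2 v₀ v))).symm
  refine ⟨hfv, fun e x hx => ?_⟩
  have := Walk.fiber σ hσ (M.emap e) x hx
  rw [this]
  exact hfv (M.esrc e)

open Multigraph in
theorem ffree_of_isEmptyE {ι : Type} (F : ι → Multigraph)
    (hedge : ∀ i, Nonempty (F i).E) {W : Multigraph} (hE : IsEmpty W.E) :
    FFree F W := by
  intro i hc
  obtain ⟨M⟩ := hc
  obtain ⟨e⟩ := hedge i
  have hne : M.esrc e ≠ M.etgt e := by
    have h2 := (F i).loopless e
    rw [M.ends_eq e] at h2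
    exact fun hq => h2 (Sym2.mk_isDiag_iff.mpr hq)
  exact hne (M.vmap_inj (walk_isEmpty hE (M.emap e)))

open Multigraph in
theorem opt_le {ι : Type} (F : ι → Multigraph) {G : Multigraph} {D : Finset G.E}
    (h : FFree F (G.deleteEdges D)) : OPT F G ≤ D.card :=
  Nat.sInf_le ⟨D, rfl, h⟩

open Multigraph in
theorem ffree_delete_univ {ι : Type} (F : ι → Multigraph)
    (hedge : ∀ i, Nonempty (F i).E) (G : Multigraph) :
    FFree F (G.deleteEdges Finset.univ) :=
  ffree_of_isEmptyE F hedge ⟨fun e => e.2 (Finset.mem_univ e.1)⟩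

open Multigraph in
theorem exists_opt {ι : Type} (F : ι → Multigraph)
    (hedge : ∀ i, Nonempty (F i).E) (G : Multigraph) :
    ∃ D : Finset G.E, D.card = OPT F G ∧ FFree F (G.deleteEdges D) := by
  have hne : {k | ∃ D : Finset G.E, D.card = k ∧ FFree F (G.deleteEdges D)}.Nonempty :=
    ⟨Finset.univ.card, Finset.univ, rfl, ffree_delete_univ F hedge G⟩
  exact Nat.sInf_mem hne

open Multigraph in
theorem ffree_of_delete_empty {ι : Type} (F : ι → Multigraph) {W : Multigraph}
    (h : FFree F (W.deleteEdges ∅)) : FFree F W := by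
  refine ffree_embed (W₁ := W) (W₂ := W.deleteEdges ∅) F (fun v => v)
      (fun _ _ hab => hab) (fun e => ⟨e, Finset.notMem_empty e⟩) ?_ ?_ h
  · intro a b hab
    exact congrArg Subtype.val hab
  · intro e
    show W.ends e = (W.ends e).map (fun v => v)
    rw [Sym2.map_id']; rfl

open Multigraph in
theorem not_ffree_self {ι : Type} (F : ι → Multigraph) (i : ι) : ¬ FFree F (F i) := by
  intro h
  apply h i
  have hne : ∀ e : (F i).E, ((F i).ends e).out.1 ≠ ((F i).ends e).out.2 := by
    intro e he
    exact (F i).loopless e (by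
      rw [sym2_eq_mk_out ((F i).ends e)]
      exact Sym2.mk_isDiag_iff.mpr he)
  refine ⟨{ vmap := fun v => v
            vmap_inj := fun _ _ hab => hab
            esrc := fun e => ((F i).ends e).out.1
            etgt := fun e => ((F i).ends e).out.2
            ends_eq := fun e => sym2_eq_mk_out _
            emap := fun e => .cons e (sym2_eq_mk_out _) (.nil _)
            emap_path := ?_
            edge_disjoint := ?_ }⟩
  · intro e
    show List.Nodup (_ :: _ :: _)
    simp [Walk.support, hne e]
  · intro e e' hne' x hx hx'
    simp only [Walk.edges, List.mem_singleton] at hx hx'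
    subst hx
    exact hne' hx'

open Multigraph in
theorem one_le_opt {ι : Type} (F : ι → Multigraph)
    (hedge : ∀ i, Nonempty (F i).E) {W : Multigraph} (h : ¬ FFree F W) :
    1 ≤ OPT F W := by
  by_contra h0
  push_neg at h0
  obtain ⟨D, hD, hfree⟩ := exists_opt F hedge W
  have hD0 : D = ∅ := Finset.card_eq_zero.mp (by omega)
  subst hD0
  exact h (ffree_of_delete_empty F hfree)


theorem sym2_map_comp_id {α β : Type} (f : α → β) (g : β → α)
    (h : ∀ a, g (f a) = a) (p : Sym2 α) : (p.map f).map g = p := by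
  induction p using Sym2.ind with
  | _ x y => simp [Sym2.map_pair_eq, h]

open Multigraph in
/-- The key replacement step: deleting the inside of an `F`-free set `X` is at
least as good as deleting its edge boundary. -/
theorem key_replace {ι : Type} (F : ι → Multigraph) (hconn : ∀ i, (F i).Connected)
    (G : Multigraph) (X : Set G.V) (hXfree : FFreeOn F G X)
    (D : Finset G.E)
    (hA : FFree F (G.deleteEdges (D ∪ (G.inducedEdges X).toFinset))) :
    FFree F (G.deleteEdges (D ∪ (G.edgeBoundary X).toFinset)) := by
  classical
  intro i hc
  obtain ⟨M⟩ := hc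
  obtain ⟨v₀⟩ := (hconn i).1
  set W₁ := G.deleteEdges (D ∪ (G.edgeBoundary X).toFinset) with hW₁
  have hσ : ∀ e : W₁.E, ∀ u ∈ W₁.ends e, ∀ w ∈ W₁.ends e,
      (u ∈ X) = (w ∈ X) := by
    intro e u hu w hw
    by_cases hu' : u ∈ X <;> by_cases hw' : w ∈ X
    · exact propext (iff_of_true hu' hw')
    · exfalso
      have hne : u ≠ w := fun h => hw' (h ▸ hu')
      have hb : e.1 ∈ G.edgeBoundary X := ⟨u, w, sym2_eq_of_mem_mem hu hw hne, hu', hw'⟩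
      exact e.2 (Finset.mem_union_right _ (Set.mem_toFinset.mpr hb))
    · exfalso
      have hne : w ≠ u := fun h => hu' (h ▸ hw')
      have hb : e.1 ∈ G.edgeBoundary X := ⟨w, u, sym2_eq_of_mem_mem hw hu hne, hw', hu'⟩
      exact e.2 (Finset.mem_union_right _ (Set.mem_toFinset.mpr hb))
    · exact propext (iff_of_false hu' hw')
  obtain ⟨hfv, hfs⟩ := model_in_fiber (fun v : W₁.V => v ∈ X) hσ (hconn i) M v₀
  by_cases h0 : M.vmap v₀ ∈ X
  · -- the model lives inside X : contradict FFreeOn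
    have hv : ∀ v, M.vmap v ∈ X := fun v => (iff_of_eq (hfv v)).mpr h0
    have hs : ∀ e : (F i).E, ∀ x ∈ (M.emap e).support, x ∈ X :=
      fun e x hx => (iff_of_eq (hfs e x hx)).mpr h0
    have hG : ∀ e : W₁.E, (∀ v ∈ W₁.ends e, v ∈ {x : W₁.V | x ∈ X}) →
        ∃ x : G.E, G.ends x = (W₁.ends e).map (fun v => v) ∧ e.1 = id x := by
      intro e _
      refine ⟨e.1, ?_, rfl⟩
      show G.ends e.1 = (G.ends e.1).map (fun v => v)
      rw [Sym2.map_id']; rfl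
    obtain ⟨M₂, hM2v, hM2s⟩ := Immersion.adapt (W₂ := G) {x : W₁.V | x ∈ X}
      (fun v => v) (fun a _ b _ hab => hab) (fun e => e.1) id
      Subtype.val_injective hG M hv hs
    exact hXfree i ⟨M₂, fun v => by rw [hM2v v]; exact hv v,
      fun e x hx => by
        obtain ⟨y, hy, hxy⟩ := hM2s e x hx
        rw [hxy]; exact hs e y hy⟩
  · -- the model lives outside X : contradict hA
    have hv : ∀ v, M.vmap v ∉ X := fun v hvX => h0 ((iff_of_eq (hfv v)).mp hvX)
    have hs : ∀ e : (F i).E, ∀ x ∈ (M.emap e).support, x ∉ X :=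
      fun e x hx hxX => h0 ((iff_of_eq (hfs e x hx)).mp hxX)
    have hG : ∀ e : W₁.E, (∀ v ∈ W₁.ends e, v ∈ {x : W₁.V | x ∉ X}) →
        ∃ x : (G.deleteEdges (D ∪ (G.inducedEdges X).toFinset)).E,
          (G.deleteEdges (D ∪ (G.inducedEdges X).toFinset)).ends x =
            (W₁.ends e).map (fun v => v) ∧ e.1 = x.1 := by
      intro e he
      refine ⟨⟨e.1, ?_⟩, ?_, rfl⟩
      · intro hmem
        rcases Finset.mem_union.mp hmem with h1 | h2
        · exact e.2 (Finset.mem_union_left _ h1)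
        · have hind := Set.mem_toFinset.mp h2
          exact he _ (Sym2.out_fst_mem (G.ends e.1))
            (hind _ (Sym2.out_fst_mem (G.ends e.1)))
      · show G.ends e.1 = (G.ends e.1).map (fun v => v)
        rw [Sym2.map_id']; rfl
    obtain ⟨M₂, -, -⟩ := Immersion.adapt
      (W₂ := G.deleteEdges (D ∪ (G.inducedEdges X).toFinset))
      {x : W₁.V | x ∉ X} (fun v => v) (fun a _ b _ hab => hab)
      (fun e => e.1) (fun x => x.1) Subtype.val_injective hG M hv hs
    exact hA i ⟨M₂⟩

open Multigraph in
/-- The disjoint union of `P` with `t` copies of `H`. -/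
def addCopies (P H : Multigraph) (t : ℕ) : Multigraph where
  V := P.V ⊕ (Fin t × H.V)
  E := P.E ⊕ (Fin t × H.E)
  fintypeV := inferInstance
  fintypeE := inferInstance
  ends := Sum.elim (fun e => (P.ends e).map Sum.inl)
    (fun q => (H.ends q.2).map (fun v => Sum.inr (q.1, v)))
  loopless := by
    rintro (e | ⟨j, e⟩) h
    · exact sym2_map_not_isDiag Sum.inl_injective (P.loopless e) h
    · refine sym2_map_not_isDiag ?_ (H.loopless e) h
      intro a b hab
      exact (Prod.ext_iff.mp (Sum.inr_injective hab)).2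

set_option maxHeartbeats 1600000 in
open Multigraph in
theorem opt_addCopies_ge {ι : Type} (F : ι → Multigraph)
    (hedge : ∀ i, Nonempty (F i).E) (P H : Multigraph) (t : ℕ) :
    OPT F P + t * OPT F H ≤ OPT F (addCopies P H t) := by
  classical
  obtain ⟨D', hcard, hfree⟩ := exists_opt F hedge (addCopies P H t)
  set L := D'.toLeft with hL
  set R := D'.toRight with hR
  have hfreeP : FFree F (P.deleteEdges L) := by
    refine ffree_embed (W₁ := P.deleteEdges L)
      (W₂ := (addCopies P H t).deleteEdges D') F
      Sum.inl Sum.inl_injective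
      (fun e => ⟨Sum.inl e.1, fun hmem => e.2 (Finset.mem_toLeft.mpr hmem)⟩)
      (fun a b hab => Subtype.ext (Sum.inl_injective (congrArg Subtype.val hab)))
      (fun e => rfl) hfree
  have hOP : OPT F P ≤ L.card := opt_le F hfreeP
  have hfreeH : ∀ j : Fin t,
      FFree F (H.deleteEdges ((R.filter (fun q => q.1 = j)).image Prod.snd)) := by
    intro j
    refine ffree_embed
      (W₁ := H.deleteEdges ((R.filter (fun q : Fin t × H.E => q.1 = j)).image Prod.snd))
      (W₂ := (addCopies P H t).deleteEdges D') F
      (fun v => Sum.inr (j, v))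
      (fun a b hab => (Prod.ext_iff.mp (Sum.inr_injective hab)).2)
      (fun e => ⟨Sum.inr (j, e.1), fun hmem =>
        e.2 (Finset.mem_image.mpr ⟨(j, e.1),
          Finset.mem_filter.mpr ⟨Finset.mem_toRight.mpr hmem, rfl⟩, rfl⟩)⟩)
      (fun a b hab =>
        Subtype.ext ((Prod.ext_iff.mp (Sum.inr_injective (congrArg Subtype.val hab))).2))
      (fun e => rfl) hfree
  have hOH : ∀ j : Fin t, OPT F H ≤ (R.filter (fun q => q.1 = j)).card :=
    fun j => le_trans (opt_le F (hfreeH j)) Finset.card_image_le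
  have hRcard : R.card = ∑ j : Fin t, (R.filter (fun q => q.1 = j)).card :=
    Finset.card_eq_sum_card_fiberwise (fun x _ => Finset.mem_univ x.1)
  have hsum : t * OPT F H ≤ R.card := by
    calc t * OPT F H = ∑ _j : Fin t, OPT F H := by
          rw [Finset.sum_const, Finset.card_univ, Fintype.card_fin, smul_eq_mul]
      _ ≤ ∑ j : Fin t, (R.filter (fun q => q.1 = j)).card :=
          Finset.sum_le_sum (fun j _ => hOH j)
      _ = R.card := hRcard.symm
  have hLR : L.card + R.card = D'.card := Finset.card_toLeft_add_card_toRight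
  omega

open Multigraph in
theorem opt_addCopies_le {ι : Type} (F : ι → Multigraph)
    (hconn : ∀ i, (F i).Connected) (hedge : ∀ i, Nonempty (F i).E)
    (P H : Multigraph) (t : ℕ) (hPV : Nonempty P.V) (hHV : Nonempty H.V) :
    OPT F (addCopies P H t) ≤ OPT F P + t * OPT F H := by
  classical
  obtain ⟨DP, hDPc, hDPf⟩ := exists_opt F hedge P
  obtain ⟨DH, hDHc, hDHf⟩ := exists_opt F hedge H
  set D : Finset (addCopies P H t).E :=
    DP.image Sum.inl ∪
      Finset.univ.biUnion (fun j : Fin t => DH.image (fun e => Sum.inr (j, e))) with hD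
  have hDcard : D.card ≤ DP.card + t * DH.card := by
    refine le_trans (Finset.card_union_le _ _)
      (add_le_add Finset.card_image_le ?_)
    refine le_trans Finset.card_biUnion_le ?_
    refine le_trans (Finset.sum_le_sum
      (fun (j : Fin t) (_ : j ∈ Finset.univ) => Finset.card_image_le)) ?_
    rw [Finset.sum_const, Finset.card_univ, Fintype.card_fin, smul_eq_mul]
  have hfree : FFree F ((addCopies P H t).deleteEdges D) := by
    intro i hc
    obtain ⟨M⟩ := hc
    obtain ⟨v₀⟩ := (hconn i).1
    set W₁ := (addCopies P H t).deleteEdges D with hW₁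
    set σ : W₁.V → Option (Fin t) :=
      fun x => Sum.elim (fun _ => none) (fun q => some q.1) x with hσd
    have hσ : ∀ e : W₁.E, ∀ u ∈ W₁.ends e, ∀ w ∈ W₁.ends e, σ u = σ w := by
      rintro ⟨e | ⟨j, e⟩, he⟩ u hu w hw
      · have hu' : u ∈ (P.ends e).map Sum.inl := hu
        have hw' : w ∈ (P.ends e).map Sum.inl := hw
        obtain ⟨a, -, rfl⟩ := Sym2.mem_map.mp hu'
        obtain ⟨b, -, rfl⟩ := Sym2.mem_map.mp hw'
        rfl
      · have hu' : u ∈ (H.ends e).map (fun v => (Sum.inr (j, v) : P.V ⊕ (Fin t × H.V))) := hu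
        have hw' : w ∈ (H.ends e).map (fun v => (Sum.inr (j, v) : P.V ⊕ (Fin t × H.V))) := hw
        obtain ⟨a, -, rfl⟩ := Sym2.mem_map.mp hu'
        obtain ⟨b, -, rfl⟩ := Sym2.mem_map.mp hw'
        rfl
    obtain ⟨hfv, hfs⟩ := model_in_fiber σ hσ (hconn i) M v₀
    rcases hs0 : σ (M.vmap v₀) with _ | j
    · -- the model lives in the `P` part
      have hv : ∀ v, σ (M.vmap v) = none := fun v => (hfv v).trans hs0
      have hs : ∀ e : (F i).E, ∀ x ∈ (M.emap e).support, σ x = none :=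
        fun e x hx => (hfs e x hx).trans hs0
      have hInj : Set.InjOn
          (Sum.elim (fun v : P.V => v) (fun _ : Fin t × H.V => Classical.choice hPV))
          {x : W₁.V | σ x = none} := by
        rintro (a | q) hx (b | q') hy hxy
        · exact congrArg Sum.inl (hxy : a = b)
        · exact (Option.some_ne_none _ (show σ (Sum.inr q') = none from hy)).elim
        · exact (Option.some_ne_none _ (show σ (Sum.inr q) = none from hx)).elim
        · exact (Option.some_ne_none _ (show σ (Sum.inr q) = none from hx)).elim
      have hG : ∀ e : W₁.E, (∀ v ∈ W₁.ends e, v ∈ {x : W₁.V | σ x = none}) →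
          ∃ x : (P.deleteEdges DP).E,
            (P.deleteEdges DP).ends x = (W₁.ends e).map
              (Sum.elim (fun v : P.V => v) (fun _ => Classical.choice hPV)) ∧
            e.1 = Sum.inl x.1 := by
        rintro ⟨e0 | ⟨j0, e0⟩, he⟩ hS
        · refine ⟨⟨e0, fun hmem =>
            he (Finset.mem_union_left _ (Finset.mem_image_of_mem _ hmem))⟩, ?_, rfl⟩
          exact (sym2_map_comp_id Sum.inl _ (fun a => rfl) (P.ends e0)).symm
        · exfalso
          have hm1 : ((H.ends e0).map
              (fun v => (Sum.inr (j0, v) : P.V ⊕ (Fin t × H.V)))).out.1 ∈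
              (H.ends e0).map (fun v => (Sum.inr (j0, v) : P.V ⊕ (Fin t × H.V))) :=
            Sym2.out_fst_mem _
          obtain ⟨a, -, ha⟩ := Sym2.mem_map.mp hm1
          have h2 := hS _ hm1
          rw [← ha] at h2
          exact (Option.some_ne_none _ (show σ (Sum.inr (j0, a)) = none from h2)).elim
      obtain ⟨M₂, -, -⟩ := Immersion.adapt (W₂ := P.deleteEdges DP)
        {x : W₁.V | σ x = none}
        (Sum.elim (fun v : P.V => v) (fun _ => Classical.choice hPV)) hInj
        (fun e => e.1) (fun x => Sum.inl x.1) Subtype.val_injective hG M hv hs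
      exact hDPf i ⟨M₂⟩
    · -- the model lives in the `j`-th copy of `H`
      have hv : ∀ v, σ (M.vmap v) = some j := fun v => (hfv v).trans hs0
      have hs : ∀ e : (F i).E, ∀ x ∈ (M.emap e).support, σ x = some j :=
        fun e x hx => (hfs e x hx).trans hs0
      have hInj : Set.InjOn
          (Sum.elim (fun _ : P.V => Classical.choice hHV) (fun q : Fin t × H.V => q.2))
          {x : W₁.V | σ x = some j} := by
        rintro (a | ⟨j1, a⟩) hx (b | ⟨j2, b⟩) hy hxy
        · exact (Option.some_ne_none _ (show σ (Sum.inl a) = some j from hx).symm).elim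
        · exact (Option.some_ne_none _ (show σ (Sum.inl a) = some j from hx).symm).elim
        · exact (Option.some_ne_none _ (show σ (Sum.inl b) = some j from hy).symm).elim
        · have hj1 : j1 = j := Option.some.inj (hx : σ (Sum.inr (j1, a)) = some j)
          have hj2 : j2 = j := Option.some.inj (hy : σ (Sum.inr (j2, b)) = some j)
          have hab : a = b := (hxy : a = b)
          subst hj1; subst hj2; subst hab; rfl
      have hG : ∀ e : W₁.E, (∀ v ∈ W₁.ends e, v ∈ {x : W₁.V | σ x = some j}) →
          ∃ x : (H.deleteEdges DH).E,
            (H.deleteEdges DH).ends x = (W₁.ends e).map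
              (Sum.elim (fun _ : P.V => Classical.choice hHV) (fun q => q.2)) ∧
            e.1 = Sum.inr (j, x.1) := by
        rintro ⟨e0 | ⟨j0, e0⟩, he⟩ hS
        · exfalso
          have hm1 : ((P.ends e0).map (Sum.inl : P.V → P.V ⊕ (Fin t × H.V))).out.1 ∈
              (P.ends e0).map Sum.inl := Sym2.out_fst_mem _
          obtain ⟨a, -, ha⟩ := Sym2.mem_map.mp hm1
          have h2 := hS _ hm1
          rw [← ha] at h2
          exact (Option.some_ne_none _ (show σ (Sum.inl a) = some j from h2).symm).elim
        · -- first, j0 = j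
          have hm1 : ((H.ends e0).map
              (fun v => (Sum.inr (j0, v) : P.V ⊕ (Fin t × H.V)))).out.1 ∈
              (H.ends e0).map (fun v => (Sum.inr (j0, v) : P.V ⊕ (Fin t × H.V))) :=
            Sym2.out_fst_mem _
          obtain ⟨a, -, ha⟩ := Sym2.mem_map.mp hm1
          have h2 := hS _ hm1
          rw [← ha] at h2
          have hj0 : j0 = j := Option.some.inj (h2 : σ (Sum.inr (j0, a)) = some j)
          subst hj0
          refine ⟨⟨e0, fun hmem => he ?_⟩, ?_, rfl⟩
          · exact Finset.mem_union_right _ (Finset.mem_biUnion.mpr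
              ⟨j0, Finset.mem_univ _, Finset.mem_image_of_mem _ hmem⟩)
          · exact (sym2_map_comp_id (fun v => (Sum.inr (j0, v) : P.V ⊕ (Fin t × H.V)))
              _ (fun a => rfl) (H.ends e0)).symm
      obtain ⟨M₂, -, -⟩ := Immersion.adapt (W₂ := H.deleteEdges DH)
        {x : W₁.V | σ x = some j}
        (Sum.elim (fun _ : P.V => Classical.choice hHV) (fun q => q.2)) hInj
        (fun e => e.1) (fun x => Sum.inr (j, x.1)) Subtype.val_injective hG M hv hs
      exact hDHf i ⟨M₂⟩
  calc OPT F (addCopies P H t) ≤ D.card := opt_le F hfree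
    _ ≤ DP.card + t * DH.card := hDcard
    _ = OPT F P + t * OPT F H := by rw [hDPc, hDHc]


/-- the protrusion replacement lemma, together with its
solution-lifting algorithm.  Here `b_F = 4 a_F² + 1` where `a_F` bounds the
tree-cut width of F-immersion-free graphs. -/
theorem protrusion_replacement {ι : Type} [Fintype ι] (F : ι → Multigraph)
    (hconn : ∀ i, (F i).Connected) (hedge : ∀ i, Nonempty (F i).E)
    (hps : ∃ i, (F i).Planar ∧ (F i).Subcubic)
    (aF : ℕ) (haF : ∀ G : Multigraph, FFree F G → tcw G ≤ aF) :
    ∃ cF : ℕ, ∀ (G : Multigraph) (X : Set G.V),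
      IsProtrusion F G (2 * (4 * aF ^ 2 + 1)) X →
      cF < (G.inducedEdges X).ncard →
      ∃ G' : Multigraph, OPT F G = OPT F G' ∧ G'.numEdges < G.numEdges ∧
        ∀ D' : Finset G'.E, FFree F (G'.deleteEdges D') →
          ∃ D : Finset G.E, FFree F (G.deleteEdges D) ∧ D.card ≤ D'.card := by
  obtain ⟨i₀, -⟩ := hps
  have hopt0 : 1 ≤ OPT F (F i₀) := one_le_opt F hedge (not_ffree_self F i₀)
  obtain ⟨Dst, hDstcard, hDstfree⟩ := exists_opt F hedge (F i₀)
  obtain ⟨estar, hestar⟩ := Finset.card_pos.mp (show 0 < Dst.card by omega)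
  set H := (F i₀).deleteEdges (Dst.erase estar) with hHdef
  have hH_not : ¬ FFree F H := by
    intro hf
    have h1 : OPT F (F i₀) ≤ (Dst.erase estar).card := opt_le F hf
    rw [Finset.card_erase_of_mem hestar] at h1
    omega
  have hH_le : OPT F H ≤ 1 := by
    have hfree1 : FFree F
        (H.deleteEdges {(⟨estar, Finset.notMem_erase _ _⟩ : H.E)}) := by
      refine ffree_embed
        (W₁ := H.deleteEdges {(⟨estar, Finset.notMem_erase _ _⟩ : H.E)})
        (W₂ := (F i₀).deleteEdges Dst) F (fun v => v) (fun _ _ h => h)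
        (fun x => ⟨x.1.1, fun hmem => by
          by_cases hx : x.1.1 = estar
          · exact x.2 (Finset.mem_singleton.mpr (Subtype.ext hx))
          · exact x.1.2 (Finset.mem_erase.mpr ⟨hx, hmem⟩)⟩)
        (fun a b hab => by
          have h' := congrArg (Subtype.val) hab
          exact Subtype.ext (Subtype.ext h'))
        (fun e => by
          show (F i₀).ends e.1.1 = ((F i₀).ends e.1.1).map (fun v => v)
          rw [Sym2.map_id']; rfl)
        hDstfree
    have := opt_le F hfree1
    exact le_of_le_of_eq this (Finset.card_singleton _)
  have hH1 : OPT F H = 1 := le_antisymm hH_le (one_le_opt F hedge hH_not)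
  refine ⟨2 * (4 * aF ^ 2 + 1) * H.numEdges, ?_⟩
  intro G X hX hn
  obtain ⟨hXb, hXfree⟩ := hX
  set A := (G.inducedEdges X).toFinset with hAdef
  set β := (G.edgeBoundary X).toFinset with hβdef
  set P := G.deleteEdges A with hPdef
  have hAcard : (G.inducedEdges X).ncard = A.card := Set.ncard_eq_toFinset_card' _
  have hβcard : (G.edgeBoundary X).ncard = β.card := Set.ncard_eq_toFinset_card' _
  have hβb : β.card ≤ 2 * (4 * aF ^ 2 + 1) := hβcard ▸ hXb
  have hnA : 2 * (4 * aF ^ 2 + 1) * H.numEdges < A.card := by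
    rw [← hAcard]; exact hn
  have hApos : 0 < A.card := by
    have := Nat.zero_le (2 * (4 * aF ^ 2 + 1) * H.numEdges)
    omega
  obtain ⟨e₁, -⟩ := Finset.card_pos.mp hApos
  have hGV : Nonempty G.V := ⟨(G.ends e₁).out.1⟩
  have hPV : Nonempty P.V := hGV
  have hHV : Nonempty H.V := (hconn i₀).1
  have h1 : OPT F P ≤ OPT F G := by
    obtain ⟨D2, hc2, hf2⟩ := exists_opt F hedge G
    have hfP : FFree F
        (P.deleteEdges (Finset.univ.filter (fun e : P.E => e.1 ∈ D2))) := by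
      refine ffree_embed
        (W₁ := P.deleteEdges (Finset.univ.filter (fun e : P.E => e.1 ∈ D2)))
        (W₂ := G.deleteEdges D2) F (fun v => v) (fun _ _ h => h)
        (fun x => ⟨x.1.1, fun hmem =>
          x.2 (Finset.mem_filter.mpr ⟨Finset.mem_univ _, hmem⟩)⟩)
        (fun a b hab => by
          have h' := congrArg (Subtype.val) hab
          exact Subtype.ext (Subtype.ext h'))
        (fun e => by
          show G.ends e.1.1 = (G.ends e.1.1).map (fun v => v)
          rw [Sym2.map_id']; rfl)
        hf2
    refine le_trans (opt_le F hfP) ?_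
    have hcard := Finset.card_le_card_of_injOn
      (s := Finset.univ.filter (fun e : P.E => e.1 ∈ D2)) (t := D2)
      (fun e : P.E => e.1)
      (fun e he => (Finset.mem_filter.mp he).2)
      (fun a _ b _ h => Subtype.ext h)
    omega
  have h2 : OPT F G ≤ OPT F P + β.card := by
    obtain ⟨D1, hc1, hf1⟩ := exists_opt F hedge P
    have hSolA : FFree F (G.deleteEdges (D1.image (fun e => e.1) ∪ A)) := by
      refine ffree_embed
        (W₁ := G.deleteEdges (D1.image (fun e : P.E => e.1) ∪ A))
        (W₂ := P.deleteEdges D1) F (fun v => v) (fun _ _ h => h)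
        (fun x => ⟨⟨x.1, fun hA' => x.2 (Finset.mem_union_right _ hA')⟩,
          fun hD1 => x.2 (Finset.mem_union_left _
            (Finset.mem_image_of_mem _ hD1))⟩)
        (fun a b hab => by
          have h' := congrArg (fun y => Subtype.val (Subtype.val y)) hab
          exact Subtype.ext h')
        (fun e => by
          show G.ends e.1 = (G.ends e.1).map (fun v => v)
          rw [Sym2.map_id']; rfl)
        hf1
    have hSolβ := key_replace F hconn G X hXfree (D1.image (fun e => e.1)) hSolA
    calc OPT F G ≤ (D1.image (fun e => e.1) ∪ β).card := opt_le F hSolβ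
      _ ≤ (D1.image (fun e => e.1)).card + β.card := Finset.card_union_le _ _
      _ ≤ D1.card + β.card := by
          have := Finset.card_image_le (f := fun e : P.E => e.1) (s := D1)
          omega
      _ = OPT F P + β.card := by rw [hc1]
  set t := OPT F G - OPT F P with htdef
  have htb : t ≤ 2 * (4 * aF ^ 2 + 1) := by omega
  set G' := addCopies P H t with hG'def
  have hge := opt_addCopies_ge F hedge P H t
  have hle := opt_addCopies_le F hconn hedge P H t hPV hHV
  rw [hH1, mul_one] at hge hle
  have hfold : OPT F (addCopies P H t) = OPT F G' := rfl
  have hOPT' : OPT F G = OPT F G' := by omega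
  have hPE : P.numEdges + A.card = G.numEdges := by
    have h1' : P.numEdges = Fintype.card {e : G.E // e ∉ A} :=
      Fintype.card_congr (Equiv.refl _)
    have h2' : Fintype.card {e : G.E // e ∈ A} + Fintype.card {e : G.E // e ∉ A} =
        Fintype.card G.E := by
      rw [← Fintype.card_sum]
      exact Fintype.card_congr (Equiv.sumCompl _)
    have h3' : Fintype.card {e : G.E // e ∈ A} = A.card := by simp
    have h4' : G.numEdges = Fintype.card G.E := rfl
    omega
  have hG'E : G'.numEdges = P.numEdges + t * H.numEdges := by
    have h1' : G'.numEdges = Fintype.card (P.E ⊕ (Fin t × H.E)) :=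
      Fintype.card_congr (Equiv.refl _)
    rw [h1', Fintype.card_sum, Fintype.card_prod, Fintype.card_fin]
    rfl
  have hmul : t * H.numEdges ≤ 2 * (4 * aF ^ 2 + 1) * H.numEdges :=
    mul_le_mul_left htb H.numEdges
  have hnum : G'.numEdges < G.numEdges := by
    calc G'.numEdges = P.numEdges + t * H.numEdges := hG'E
      _ < P.numEdges + A.card :=
        Nat.add_lt_add_left (lt_of_le_of_lt hmul hnA) _
      _ = G.numEdges := hPE
  refine ⟨G', hOPT', hnum, ?_⟩
  intro D' hD'
  obtain ⟨Dopt, hDoptc, hDoptf⟩ := exists_opt F hedge G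
  refine ⟨Dopt, hDoptf, ?_⟩
  have hD'le := opt_le F hD'
  omega
end
end
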